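/- Condensation unitary exists: for any finite orthonormal family ξ₁, …, ξ_k of quantum strings spanning a prefix free Hilbert space, each supported on strings of length ≤ l_max, and any n ≥ 1, the map sending the zero-extended forms |ξ_{i₁}^{zef}⟩ ⊗ ⋯ ⊗ |ξ_{iₙ}^{zef}⟩ to the zero-extended form of the concatenation (|ξ_{i₁}⟩ ⋯ |ξ_{iₙ}⟩)^{zef} is well-defined on an orthonormal set and extends to a unitary on (ℂ²)^{⊗ n·l_max}; i.e., prefix free Hilbert spaces are condensable. -/

import Mathlib

open scoped Classical BigOperators

noncomputable section

/-- Quantum strings: finitely-supported amplitude functions on finite binary strings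
(the Fock space ⊕ₙ (ℂ²)^{⊗n}). -/
abbrev QStr := (List Bool) →₀ ℂ

/-- Inner product ⟨φ|ψ⟩ = Σ conj(φ x) ψ x. -/
noncomputable def inn (φ ψ : QStr) : ℂ :=
  ∑ x ∈ φ.support ∪ ψ.support, (starRingEnd ℂ) (φ x) * ψ x

/-- Concatenation |φχ⟩, extended bilinearly from basis strings. -/
noncomputable def qconcat (φ χ : QStr) : QStr :=
  φ.sum fun x a => χ.sum fun y b => Finsupp.single (x ++ y) (a * b)

/-- |φ⟩ is a (quantum) prefix of |ψ⟩. -/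
def QIsPrefix (φ ψ : QStr) : Prop :=
  ∃ χ : QStr, χ [] = 0 ∧ inn (qconcat φ χ) ψ ≠ 0

/-- Base length: maximal classical length in the support. -/
noncomputable def baseLen (ψ : QStr) : ℕ := ψ.support.sup List.length

/-- Average length. -/
noncomputable def avgLen (ψ : QStr) : ℝ := ∑ x ∈ ψ.support, ‖ψ x‖ ^ 2 * (x.length : ℝ)

/-- Zero padding of a classical string to m (qu)bits. -/
def pad (m : ℕ) (x : List Bool) : Fin m → Bool := fun i => x.getD i false

/-- Zero-extended form of a quantum string supported on lengths ≤ m, as a vector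
of (ℂ²)^{⊗ m} ≅ ℓ²({0,1}^m). -/
noncomputable def zef (m : ℕ) (ψ : QStr) : EuclideanSpace ℂ (Fin m → Bool) :=
  (WithLp.equiv 2 ((Fin m → Bool) → ℂ)).symm
    (fun s => ∑ x ∈ ψ.support, if pad m x = s then ψ x else 0)

/-- Concatenation of a list of quantum strings. -/
noncomputable def concatList : List QStr → QStr
  | [] => Finsupp.single [] 1
  | φ :: rest => qconcat φ (concatList rest)

/-- Index of the i-th bit of the j-th block. -/
def embedIdx (n lmax : ℕ) (j : Fin n) (i : Fin lmax) : Fin (n * lmax) :=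
  ⟨j.1 * lmax + i.1, by
    have h1 : j.1 * lmax + i.1 < (j.1 + 1) * lmax := by
      have hi := i.2; rw [add_mul, one_mul]; omega
    exact lt_of_lt_of_le h1 (Nat.mul_le_mul_right lmax j.2)⟩

/-- Tensor product |ξ₁^{zef}⟩ ⊗ ⋯ ⊗ |ξₙ^{zef}⟩ in (ℂ²)^{⊗ n·lmax}. -/
noncomputable def tensorZef (n lmax : ℕ) (f : Fin n → QStr) :
    EuclideanSpace ℂ (Fin (n * lmax) → Bool) :=
  (WithLp.equiv 2 ((Fin (n * lmax) → Bool) → ℂ)).symm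
    (fun s => ∏ j : Fin n, zef lmax (f j) (fun i => s (embedIdx n lmax j i)))

/-!
Write ⟨φ w|ψ⟩ for the inner product of `ψ` with `φ` followed by the classical string `w`. Prefix
freeness says ⟨ξᵢ w|ξⱼ⟩ = 0 for every `w ≠ []`. This property, together with the Gram matrix,
passes to concatenations: ⟨(φA) w|ψB⟩ = ⟨φ|ψ⟩⟨A w|B⟩, because if `x v w = y v'` then either
`v w = t v'`, which contributes ⟨φ t|ψ⟩, or `v' = t v w` with `t ≠ []`, which contributes the
conjugate of ⟨ψ t|φ⟩. Zero extension identifies `x` only with the strings `x 0ᵈ`, so it preserves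
the inner product of such pairs. Hence the tensors of zero-extended forms and the zero-extended
concatenations both have the Gram matrix ∏ⱼ ⟨ξ_{gⱼ}|ξ_{g'ⱼ}⟩ = δ_{g g'}, and a bijection between
two finite orthonormal families extends to a unitary.
-/

open scoped ComplexConjugate

theorem Orthonormal.exists_linearIsometryEquiv_apply_eq {ι 𝕜 E : Type*} [RCLike 𝕜] [Fintype ι]
    [NormedAddCommGroup E] [InnerProductSpace 𝕜 E] [FiniteDimensional 𝕜 E]
    {v w : ι → E} (hv : Orthonormal 𝕜 v) (hw : Orthonormal 𝕜 w) :
    ∃ U : E ≃ₗᵢ[𝕜] E, ∀ i, U (v i) = w i := by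
  classical
  let κ := Fin (Module.finrank 𝕜 E - Fintype.card ι)
  have hcard : Module.finrank 𝕜 E = Fintype.card (ι ⊕ κ) := by
    have := hv.linearIndependent.fintype_card_le_finrank
    simp [κ]; omega
  have extend : ∀ u : ι → E, Orthonormal 𝕜 u → ∃ b : OrthonormalBasis (ι ⊕ κ) 𝕜 E,
      ∀ i, b (Sum.inl i) = u i := by
    intro u hu
    obtain ⟨b, hb⟩ := Orthonormal.exists_orthonormalBasis_extension_of_card_eq hcard
      (v := Sum.elim u 0) (s := Set.range Sum.inl) (by
        convert hu.comp _ (Equiv.ofInjective (Sum.inl : ι → ι ⊕ κ) Sum.inl_injective).symm.injective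
          using 1
        ext ⟨_, i, rfl⟩
        simp)
    exact ⟨b, fun i => hb _ ⟨i, rfl⟩⟩
  obtain ⟨bv, hbv⟩ := extend v hv
  obtain ⟨bw, hbw⟩ := extend w hw
  exact ⟨bv.equiv bw (Equiv.refl _), fun i => by
    rw [← hbv, ← hbw, OrthonormalBasis.equiv_apply_basis, Equiv.refl_apply]⟩

-- The part of ⟨φ|ψ⟩ contributed by the pairs of basis strings related by `R`.
def innRel (R : List Bool → List Bool → Prop) (φ ψ : QStr) : ℂ :=
  φ.sum fun x a => ψ.sum fun y b => if R x y then conj a * b else 0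

lemma innRel_eq_sum (R : List Bool → List Bool → Prop) (φ ψ : QStr) :
    innRel R φ ψ = ∑ x ∈ φ.support, ∑ y ∈ ψ.support, if R x y then conj (φ x) * ψ y else 0 :=
  rfl

-- ⟨φ w|ψ⟩
def innAppend (w : List Bool) (φ ψ : QStr) : ℂ :=
  innRel (fun x y => y = x ++ w) φ ψ

-- Equivalent, by linearity in the extension, to `¬ QIsPrefix φ ψ`.
def ExtensionsOrthogonal (φ ψ : QStr) : Prop :=
  ∀ w ≠ [], innAppend w φ ψ = 0

lemma innRel_flip (R : List Bool → List Bool → Prop) (φ ψ : QStr) :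
    innRel R φ ψ = conj (innRel (fun y x => R x y) ψ φ) := by
  simp only [innRel_eq_sum, map_sum]
  rw [Finset.sum_comm]
  refine Finset.sum_congr rfl fun x _ => Finset.sum_congr rfl fun y _ => ?_
  split_ifs <;> simp [mul_comm]

lemma innRel_congr {R S : List Bool → List Bool → Prop} {φ ψ : QStr}
    (h : ∀ x ∈ φ.support, ∀ y ∈ ψ.support, R x y ↔ S x y) : innRel R φ ψ = innRel S φ ψ :=
  Finset.sum_congr rfl fun x hx => Finset.sum_congr rfl fun y hy => by
    simp only [h x hx y hy]

lemma innRel_or {R S : List Bool → List Bool → Prop} (h : ∀ x y, R x y → ¬ S x y)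
    (φ ψ : QStr) : innRel (fun x y => R x y ∨ S x y) φ ψ = innRel R φ ψ + innRel S φ ψ := by
  simp only [innRel_eq_sum, ← Finset.sum_add_distrib]
  refine Finset.sum_congr rfl fun x _ => Finset.sum_congr rfl fun y _ => ?_
  by_cases hR : R x y
  · simp [hR, h x y hR]
  · simp [hR]

lemma innRel_exists {ι : Type*} (s : Finset ι) {R : ι → List Bool → List Bool → Prop}
    (h : ∀ x y, ∀ i ∈ s, ∀ j ∈ s, R i x y → R j x y → i = j) (φ ψ : QStr) :
    innRel (fun x y => ∃ i ∈ s, R i x y) φ ψ = ∑ i ∈ s, innRel (R i) φ ψ := by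
  simp only [innRel_eq_sum]
  rw [Finset.sum_comm (s := s)]
  refine Finset.sum_congr rfl fun x _ => ?_
  rw [Finset.sum_comm (s := s)]
  refine Finset.sum_congr rfl fun y _ => ?_
  rw [Finset.sum_ite_zero s _ (h x y)]
  -- the two sides differ only in their `Decidable` instances
  congr

lemma inn_eq_innRel (φ ψ : QStr) : inn φ ψ = innRel (· = ·) φ ψ := by
  rw [inn, innRel_eq_sum, ← Finset.sum_subset Finset.subset_union_left]
  · refine Finset.sum_congr rfl fun x _ => ?_
    rw [Finset.sum_eq_single x (fun y _ hyx => by simp [Ne.symm hyx])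
      (fun hx => by simp [Finsupp.notMem_support_iff.mp hx]), if_pos rfl]
  · intro x _ hx
    simp [Finsupp.notMem_support_iff.mp hx]

lemma innAppend_nil (φ ψ : QStr) : innAppend [] φ ψ = inn φ ψ := by
  simp only [innAppend, List.append_nil, inn_eq_innRel]
  exact innRel_congr fun x _ y _ => eq_comm

lemma innRel_single_single (R : List Bool → List Bool → Prop) (x y : List Bool) (a b : ℂ) :
    innRel R (Finsupp.single x a) (Finsupp.single y b) = if R x y then conj a * b else 0 := by
  simp [innRel]

lemma innRel_sum_left {α : Type*} {M : Type*} [Zero M] (R : List Bool → List Bool → Prop)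
    (f : α →₀ M) (g : α → M → QStr) (ψ : QStr) :
    innRel R (f.sum g) ψ = f.sum fun a m => innRel R (g a m) ψ :=
  Finsupp.sum_sum_index (by simp) fun _ _ _ => by
    simp only [map_add, add_mul, ← Finsupp.sum_add]
    exact Finsupp.sum_congr fun _ _ => by split_ifs <;> simp

lemma innRel_sum_right {α : Type*} {M : Type*} [Zero M] (R : List Bool → List Bool → Prop)
    (φ : QStr) (f : α →₀ M) (g : α → M → QStr) :
    innRel R φ (f.sum g) = f.sum fun a m => innRel R φ (g a m) := by
  rw [innRel_flip, innRel_sum_left, Finsupp.sum, map_sum]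
  exact Finset.sum_congr rfl fun a _ => by rw [innRel_flip, Complex.conj_conj]

lemma innRel_qconcat (R : List Bool → List Bool → Prop) (φ A ψ B : QStr) :
    innRel R (qconcat φ A) (qconcat ψ B) =
      A.sum fun v c => B.sum fun v' d =>
        conj c * d * innRel (fun x y => R (x ++ v) (y ++ v')) φ ψ := by
  simp only [qconcat, innRel_sum_left, innRel_sum_right, innRel_single_single]
  simp only [innRel, Finsupp.mul_sum]
  simp_rw [Finsupp.sum_comm φ A, Finsupp.sum_comm B A, Finsupp.sum_comm ψ A,
    Finsupp.sum_comm ψ B, Finsupp.sum_comm ψ φ]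
  refine Finsupp.sum_congr fun v _ => Finsupp.sum_congr fun v' _ =>
    Finsupp.sum_congr fun x _ => Finsupp.sum_congr fun y _ => ?_
  split_ifs <;> simp only [map_mul, mul_zero]; ring

lemma qconcat_single_nil (ψ : QStr) : qconcat ψ (Finsupp.single [] 1) = ψ := by
  rw [qconcat]
  conv_rhs => rw [← Finsupp.sum_single ψ]
  refine Finsupp.sum_congr fun x _ => ?_
  rw [Finsupp.sum_single_index (by simp), List.append_nil, mul_one]

lemma innAppend_eq_inn_qconcat (w : List Bool) (φ ψ : QStr) :
    innAppend w φ ψ = inn (qconcat φ (Finsupp.single w 1)) ψ := by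
  conv_rhs => rw [← qconcat_single_nil ψ, inn_eq_innRel, innRel_qconcat]
  simp only [Finsupp.sum_single_index, map_zero, zero_mul, map_one, one_mul, List.append_nil]
  exact innRel_congr fun x _ y _ => eq_comm

lemma ExtensionsOrthogonal.of_not_qIsPrefix {φ ψ : QStr} (h : ¬ QIsPrefix φ ψ) :
    ExtensionsOrthogonal φ ψ := fun w hw => by
  rw [innAppend_eq_inn_qconcat]
  by_contra hne
  exact h ⟨_, by simp [hw], hne⟩

lemma innRel_append_append {φ ψ : QStr} (hφψ : ExtensionsOrthogonal φ ψ)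
    (hψφ : ExtensionsOrthogonal ψ φ) (u v : List Bool) :
    innRel (fun x y => y ++ v = x ++ u) φ ψ = if u = v then inn φ ψ else 0 := by
  by_cases hsuffix : ∃ t, u = t ++ v
  · obtain ⟨t, rfl⟩ := hsuffix
    rw [innRel_congr (S := fun x y => y = x ++ t) fun x _ y _ => by
      rw [← List.append_assoc, List.append_left_inj]]
    rcases eq_or_ne t [] with rfl | ht
    · rw [if_pos (List.nil_append v), ← innAppend_nil, innAppend]
    · rw [← innAppend, hφψ t ht, if_neg]
      intro h
      simpa [ht] using congrArg List.length h
  by_cases hsuffix' : ∃ t, v = t ++ u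
  · obtain ⟨t, rfl⟩ := hsuffix'
    have ht : t ≠ [] := by rintro rfl; exact hsuffix ⟨[], rfl⟩
    rw [innRel_congr (S := fun x y => x = y ++ t) fun x _ y _ => by
      rw [← List.append_assoc, List.append_left_inj, eq_comm], innRel_flip, ← innAppend,
      hψφ t ht, map_zero, if_neg]
    intro h
    simpa [ht] using congrArg List.length h
  · rw [innRel_congr (S := fun _ _ => False) fun x _ y _ => by
      simp only [List.append_eq_append_iff, iff_false, not_or, not_exists, not_and]
      exact ⟨fun t _ h => hsuffix' ⟨t, h⟩, fun t _ h => hsuffix ⟨t, h⟩⟩, if_neg]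
    · simp [innRel]
    · rintro rfl; exact hsuffix ⟨[], rfl⟩

lemma innAppend_qconcat {φ ψ : QStr} (hφψ : ExtensionsOrthogonal φ ψ)
    (hψφ : ExtensionsOrthogonal ψ φ) (w : List Bool) (A B : QStr) :
    innAppend w (qconcat φ A) (qconcat ψ B) = inn φ ψ * innAppend w A B := by
  simp only [innAppend, innRel_qconcat, List.append_assoc, innRel_append_append hφψ hψφ]
  rw [innRel, Finsupp.mul_sum]
  refine Finsupp.sum_congr fun v _ => ?_
  rw [Finsupp.mul_sum]
  refine Finsupp.sum_congr fun v' _ => ?_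
  simp only [eq_comm (a := v')]
  split_ifs <;> ring

lemma innAppend_concatList_ofFn {n : ℕ} (f f' : Fin n → QStr)
    (h : ∀ j, ExtensionsOrthogonal (f j) (f' j)) (h' : ∀ j, ExtensionsOrthogonal (f' j) (f j))
    (w : List Bool) :
    innAppend w (concatList (List.ofFn f)) (concatList (List.ofFn f')) =
      if w = [] then ∏ j, inn (f j) (f' j) else 0 := by
  induction n with
  | zero => simp [concatList, innAppend, innRel_single_single, eq_comm]
  | succ n ih =>
    rw [List.ofFn_succ, List.ofFn_succ, concatList, concatList, innAppend_qconcat (h 0) (h' 0),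
      ih _ _ (fun j => h j.succ) (fun j => h' j.succ), Fin.prod_univ_succ]
    split_ifs <;> simp

lemma inn_concatList_ofFn {n : ℕ} (f f' : Fin n → QStr)
    (h : ∀ j, ExtensionsOrthogonal (f j) (f' j)) (h' : ∀ j, ExtensionsOrthogonal (f' j) (f j)) :
    inn (concatList (List.ofFn f)) (concatList (List.ofFn f')) = ∏ j, inn (f j) (f' j) := by
  rw [← innAppend_nil, innAppend_concatList_ofFn f f' h h', if_pos rfl]

lemma extensionsOrthogonal_concatList_ofFn {n : ℕ} (f f' : Fin n → QStr)
    (h : ∀ j, ExtensionsOrthogonal (f j) (f' j)) (h' : ∀ j, ExtensionsOrthogonal (f' j) (f j)) :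
    ExtensionsOrthogonal (concatList (List.ofFn f)) (concatList (List.ofFn f')) := fun w hw => by
  rw [innAppend_concatList_ofFn f f' h h', if_neg hw]

lemma exists_append_of_mem_support_qconcat {φ χ : QStr} {z : List Bool}
    (hz : z ∈ (qconcat φ χ).support) : ∃ x ∈ φ.support, ∃ y ∈ χ.support, z = x ++ y := by
  obtain ⟨x, hx, hz⟩ := Finset.mem_biUnion.mp (Finsupp.support_sum hz)
  obtain ⟨y, hy, hz⟩ := Finset.mem_biUnion.mp (Finsupp.support_sum hz)
  exact ⟨x, hx, y, hy, Finset.mem_singleton.mp (Finsupp.support_single_subset hz)⟩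

lemma length_le_of_mem_support_concatList_ofFn {n l : ℕ} (f : Fin n → QStr)
    (hf : ∀ j, ∀ x ∈ (f j).support, x.length ≤ l) :
    ∀ z ∈ (concatList (List.ofFn f)).support, z.length ≤ n * l := by
  induction n with
  | zero =>
    intro z hz
    simp [Finset.mem_singleton.mp (Finsupp.support_single_subset hz)]
  | succ n ih =>
    intro z hz
    rw [List.ofFn_succ, concatList] at hz
    obtain ⟨x, hx, y, hy, rfl⟩ := exists_append_of_mem_support_qconcat hz
    have hy' := ih _ (fun j => hf j.succ) y hy
    have hx' := hf 0 x hx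
    simp only [List.length_append, Nat.succ_mul]
    omega

lemma zef_eq_sum (m : ℕ) (ψ : QStr) :
    zef m ψ = ψ.sum fun x a => EuclideanSpace.single (pad m x) a := by
  ext s
  simp [zef, Finsupp.sum, WithLp.ofLp_sum, Pi.single_apply, eq_comm]

lemma inner_zef (m : ℕ) (φ ψ : QStr) :
    inner ℂ (zef m φ) (zef m ψ) = innRel (fun x y => pad m x = pad m y) φ ψ := by
  simp only [zef_eq_sum, Finsupp.sum, sum_inner, inner_sum, EuclideanSpace.inner_single_left,
    innRel_eq_sum]
  rw [Finset.sum_comm]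
  refine Finset.sum_congr rfl fun x _ => Finset.sum_congr rfl fun y _ => ?_
  simp

lemma pad_append_replicate (m d : ℕ) (x : List Bool) :
    pad m (x ++ List.replicate d false) = pad m x := by
  funext i
  simp only [pad, List.getD_eq_getElem?_getD, List.getElem?_append]
  split_ifs with h
  · rfl
  · simp only [List.getElem?_replicate, List.getElem?_eq_none (not_lt.mp h)]
    split_ifs <;> rfl

lemma eq_append_replicate_of_pad_eq {m : ℕ} {x y : List Bool} (hy : y.length ≤ m)
    (hxy : x.length ≤ y.length) (h : pad m x = pad m y) :
    y = x ++ List.replicate (y.length - x.length) false := by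
  refine List.ext_getElem (by simp; omega) fun i hi _ => ?_
  have hpad : x.getD i false = y.getD i false := congrFun h ⟨i, by omega⟩
  rw [List.getD_eq_getElem _ _ hi] at hpad
  rw [← hpad, List.getElem_append]
  split_ifs with hix
  · rw [List.getD_eq_getElem _ _ hix]
  · rw [List.getD_eq_default _ _ (not_lt.mp hix), List.getElem_replicate]

lemma pad_eq_pad_iff {m : ℕ} {x y : List Bool} (hx : x.length ≤ m) (hy : y.length ≤ m) :
    pad m x = pad m y ↔ (∃ d ∈ Finset.range (m + 1), y = x ++ List.replicate d false) ∨
      ∃ d ∈ Finset.Icc 1 m, x = y ++ List.replicate d false := by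
  constructor
  · intro h
    rcases le_or_gt x.length y.length with hxy | hxy
    · exact Or.inl ⟨_, Finset.mem_range.mpr (by omega), eq_append_replicate_of_pad_eq hy hxy h⟩
    · exact Or.inr ⟨_, Finset.mem_Icc.mpr (by omega),
        eq_append_replicate_of_pad_eq hx hxy.le h.symm⟩
  · rintro (⟨d, -, rfl⟩ | ⟨d, -, rfl⟩) <;> simp [pad_append_replicate]

lemma inner_zef_eq_inn {m : ℕ} {φ ψ : QStr} (hφ : ∀ x ∈ φ.support, x.length ≤ m)
    (hψ : ∀ y ∈ ψ.support, y.length ≤ m) (hφψ : ExtensionsOrthogonal φ ψ)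
    (hψφ : ExtensionsOrthogonal ψ φ) : inner ℂ (zef m φ) (zef m ψ) = inn φ ψ := by
  have hunique : ∀ (x y : List Bool) (s : Finset ℕ), ∀ d ∈ s, ∀ e ∈ s,
      y = x ++ List.replicate d false → y = x ++ List.replicate e false → d = e := by
    rintro x y s d - e - rfl h
    simpa using congrArg List.length h
  rw [inner_zef, innRel_congr fun x hx y hy => pad_eq_pad_iff (hφ x hx) (hψ y hy), innRel_or,
    innRel_exists _ (fun x y => hunique x y _), innRel_flip (fun x y => ∃ d ∈ _, _),
    innRel_exists _ (fun x y => hunique x y _)]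
  · show ∑ d ∈ _, innAppend (List.replicate d false) φ ψ
      + conj (∑ d ∈ _, innAppend (List.replicate d false) ψ φ) = _
    rw [Finset.sum_eq_single_of_mem 0 (by simp) fun d _ hd => hφψ _ (by simpa using hd),
      Finset.sum_eq_zero fun d hd => hψφ _ (by simp at hd ⊢; omega)]
    simp [innAppend_nil]
  · rintro x y ⟨d, -, rfl⟩ ⟨e, he, h⟩
    have := congrArg List.length h
    simp at this he
    omega

lemma embedIdx_eq_finProdFinEquiv (n l : ℕ) (j : Fin n) (i : Fin l) :
    embedIdx n l j i = finProdFinEquiv (j, i) := by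
  ext
  simp only [embedIdx, finProdFinEquiv_apply_val]
  ring

lemma sum_prod_embedIdx {α R : Type*} [Fintype α] [DecidableEq α] [CommSemiring R] (n l : ℕ)
    (g : Fin n → (Fin l → α) → R) :
    ∑ s : Fin (n * l) → α, ∏ j, g j (fun i => s (embedIdx n l j i)) = ∏ j, ∑ t, g j t := by
  let e : (Fin n → Fin l → α) ≃ (Fin (n * l) → α) :=
    (Equiv.curry _ _ _).symm.trans (finProdFinEquiv.arrowCongr (Equiv.refl α))
  rw [← e.sum_comp, Fintype.prod_sum]
  refine Fintype.sum_congr _ _ fun t => Fintype.prod_congr _ _ fun j => congrArg (g j) ?_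
  funext i
  simp [e, embedIdx_eq_finProdFinEquiv]

lemma inner_tensorZef (n l : ℕ) (f f' : Fin n → QStr) :
    inner ℂ (tensorZef n l f) (tensorZef n l f') =
      ∏ j, inner ℂ (zef l (f j)) (zef l (f' j)) := by
  simp only [PiLp.inner_apply, tensorZef, WithLp.equiv_symm_apply,
    RCLike.inner_apply', map_prod, ← Finset.prod_mul_distrib]
  exact sum_prod_embedIdx n l fun j t => conj (zef l (f j) t) * zef l (f' j) t

theorem stmt_19_general (k lmax n : ℕ) (ξ : Fin k → QStr)
    (hsupp : ∀ i, ∀ x ∈ (ξ i).support, x.length ≤ lmax)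
    (horthonormal : ∀ i j, inn (ξ i) (ξ j) = if i = j then 1 else 0)
    (hpf : ∀ i j, ∀ χ : QStr, χ [] = 0 → inn (qconcat (ξ i) χ) (ξ j) = 0) :
    Orthonormal ℂ
        (fun g : Fin n → Fin k => zef (n * lmax) (concatList (List.ofFn fun j => ξ (g j))))
      ∧ ∃ U : EuclideanSpace ℂ (Fin (n * lmax) → Bool)
            ≃ₗᵢ[ℂ] EuclideanSpace ℂ (Fin (n * lmax) → Bool),
          ∀ g : Fin n → Fin k,
            U (tensorZef n lmax fun j => ξ (g j))
              = zef (n * lmax) (concatList (List.ofFn fun j => ξ (g j))) := by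
  have hext : ∀ i j, ExtensionsOrthogonal (ξ i) (ξ j) := fun i j =>
    .of_not_qIsPrefix fun ⟨χ, hχ, hne⟩ => hne (hpf i j χ hχ)
  have hgram (g g' : Fin n → Fin k) :
      ∏ j, inn (ξ (g j)) (ξ (g' j)) = if g = g' then 1 else 0 := by
    simp [horthonormal, Finset.prod_boole, funext_iff]
  have hconcat : Orthonormal ℂ fun g : Fin n → Fin k =>
      zef (n * lmax) (concatList (List.ofFn fun j => ξ (g j))) := by
    refine orthonormal_iff_ite.mpr fun g g' => ?_
    rw [inner_zef_eq_inn (length_le_of_mem_support_concatList_ofFn _ fun j => hsupp (g j))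
      (length_le_of_mem_support_concatList_ofFn _ fun j => hsupp (g' j))
      (extensionsOrthogonal_concatList_ofFn _ _ (fun j => hext _ _) fun j => hext _ _)
      (extensionsOrthogonal_concatList_ofFn _ _ (fun j => hext _ _) fun j => hext _ _),
      inn_concatList_ofFn _ _ (fun j => hext _ _) fun j => hext _ _, hgram]
  have htensor : Orthonormal ℂ fun g : Fin n → Fin k => tensorZef n lmax fun j => ξ (g j) := by
    refine orthonormal_iff_ite.mpr fun g g' => ?_
    simp only [inner_tensorZef, inner_zef_eq_inn (hsupp _) (hsupp _) (hext _ _) (hext _ _), hgram]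
  exact ⟨hconcat, Orthonormal.exists_linearIsometryEquiv_apply_eq htensor hconcat⟩

/-- prefix free Hilbert spaces are condensable: the zero-extended
concatenations form an orthonormal family, and a unitary maps each tensor of
zero-extended forms to the zero-extended form of the concatenation. -/
theorem stmt_19 (k lmax n : ℕ) (hn : 1 ≤ n) (ξ : Fin k → QStr)
    (hsupp : ∀ i, ∀ x ∈ (ξ i).support, x.length ≤ lmax)
    (horthonormal : ∀ i j, inn (ξ i) (ξ j) = if i = j then 1 else 0)
    (hpf : ∀ i j, ∀ χ : QStr, χ [] = 0 → inn (qconcat (ξ i) χ) (ξ j) = 0) :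
    Orthonormal ℂ
        (fun g : Fin n → Fin k => zef (n * lmax) (concatList (List.ofFn fun j => ξ (g j))))
      ∧ ∃ U : EuclideanSpace ℂ (Fin (n * lmax) → Bool)
            ≃ₗᵢ[ℂ] EuclideanSpace ℂ (Fin (n * lmax) → Bool),
          ∀ g : Fin n → Fin k,
            U (tensorZef n lmax fun j => ξ (g j))
              = zef (n * lmax) (concatList (List.ofFn fun j => ξ (g j))) :=
  stmt_19_general k lmax n ξ hsupp horthonormal hpf

end
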